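/- arXiv:1803.00665 — 3 statements merged into one kernel-verified Lean document; each statement's English description precedes it below -/
import Mathlib

section
/- Observational entropy is extensive: for a tensor-product Hilbert space H = H^(1) ⊗ ⋯ ⊗ H^(m), a product coarse-graining C = C^(1) ⊗ ⋯ ⊗ C^(m) whose elements are P_{i₁} ⊗ ⋯ ⊗ P_{i_m}, and a product state ρ = ρ^(1) ⊗ ⋯ ⊗ ρ^(m), one has S_O(C)(ρ) = Σ_{k=1}^m S_O(C^(k))(ρ^(k)). -/
open scoped BigOperators ComplexOrder
open Matrix

/-- A coarse-graining: a family of nonzero, mutually orthogonal Hermitian projectors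
summing to the identity. -/
def IsCoarseGraining {n : Type} [Fintype n] [DecidableEq n] {ι : Type} [Fintype ι]
    (P : ι → Matrix n n ℂ) : Prop :=
  (∀ i, (P i).IsHermitian) ∧ (∀ i, P i * P i = P i) ∧ (∀ i, P i ≠ 0) ∧
  (∀ i j, i ≠ j → P i * P j = 0) ∧ (∑ i, P i = 1)

/-- A density matrix: positive semidefinite with unit trace. -/
def IsDensityMatrix {n : Type} [Fintype n] [DecidableEq n] (ρ : Matrix n n ℂ) : Prop :=
  ρ.PosSemidef ∧ ρ.trace = 1

/-- Probability of macrostate `i`: `p_i = tr(P_i ρ)`. -/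
noncomputable def prob {n : Type} [Fintype n] [DecidableEq n] {ι : Type} [Fintype ι]
    (P : ι → Matrix n n ℂ) (ρ : Matrix n n ℂ) (i : ι) : ℝ :=
  ((P i * ρ).trace).re

/-- Volume of macrostate `i`: `tr(P_i)`. -/
noncomputable def vol {n : Type} [Fintype n] [DecidableEq n] {ι : Type} [Fintype ι]
    (P : ι → Matrix n n ℂ) (i : ι) : ℝ :=
  ((P i).trace).re

/-- Observational entropy `S_O(C)(ρ) = -∑_{i : p_i ≠ 0} p_i ln (p_i / tr P_i)`.
(Terms with `p_i = 0` vanish since `0 * log _ = 0`.) -/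
noncomputable def obsEntropy {n : Type} [Fintype n] [DecidableEq n] {ι : Type} [Fintype ι]
    (P : ι → Matrix n n ℂ) (ρ : Matrix n n ℂ) : ℝ :=
  -∑ i, prob P ρ i * Real.log (prob P ρ i / vol P i)

/-!
The probability `tr (P_i ρ)` and the volume `tr P_i` of a product macrostate `i = (i₁, …, i_m)`
both factor over the tensor factors, because the trace of a Kronecker product is the product of
the traces. Hence `log (p_i / V_i)` splits into a sum over `k`, and summing the `k`-th term against
the product distribution `∏ p_{i_k}` leaves the `k`-th marginal, since the others sum to one.
-/

section ProductSums

variable {κ : Type*} [Fintype κ] [DecidableEq κ] {ι : κ → Type*} [∀ k, Fintype (ι k)]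

theorem sum_pi_prod_mul_apply {R : Type*} [CommSemiring R] (f : ∀ k, ι k → R)
    (hf : ∀ k, ∑ a, f k a = 1) (k : κ) (g : ι k → R) :
    ∑ i : ∀ j, ι j, (∏ j, f j (i j)) * g (i k) = ∑ a, f k a * g a := by
  set F := Function.update f k fun a => f k a * g a
  have hF : ∀ i : ∀ j, ι j, (∏ j, f j (i j)) * g (i k) = ∏ j, F j (i j) := by
    intro i
    have hF_ne : ∀ j ∈ Finset.univ.erase k, F j (i j) = f j (i j) := fun j hj => by
      simp only [F, Function.update_of_ne (Finset.ne_of_mem_erase hj)]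
    rw [← Finset.mul_prod_erase _ _ (Finset.mem_univ k),
      ← Finset.mul_prod_erase _ (fun j => F j (i j)) (Finset.mem_univ k),
      Finset.prod_congr rfl hF_ne]
    simp only [F, Function.update_self]
    ring
  rw [Finset.sum_congr rfl fun i _ => hF i, ← Fintype.prod_sum,
    Finset.prod_eq_single k (fun j _ hj => by simp only [F, Function.update_of_ne hj, hf])
      (fun h => absurd (Finset.mem_univ k) h)]
  simp only [F, Function.update_self]

theorem prod_mul_log_prod_div (s : Finset κ) (f v : κ → ℝ) (hv : ∀ k ∈ s, v k ≠ 0) :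
    (∏ k ∈ s, f k) * Real.log ((∏ k ∈ s, f k) / ∏ k ∈ s, v k)
      = ∑ k ∈ s, (∏ j ∈ s, f j) * Real.log (f k / v k) := by
  by_cases hf : ∀ k ∈ s, f k ≠ 0
  · rw [← Finset.prod_div_distrib, Real.log_prod fun k hk => div_ne_zero (hf k hk) (hv k hk),
      Finset.mul_sum]
  · push Not at hf
    obtain ⟨k, hk, hfk⟩ := hf
    simp [Finset.prod_eq_zero hk hfk]

theorem sum_pi_prod_mul_log_prod_div (f v : ∀ k, ι k → ℝ) (hf : ∀ k, ∑ a, f k a = 1)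
    (hv : ∀ k a, v k a ≠ 0) :
    ∑ i : ∀ k, ι k, (∏ k, f k (i k)) * Real.log ((∏ k, f k (i k)) / ∏ k, v k (i k))
      = ∑ k, ∑ a, f k a * Real.log (f k a / v k a) := by
  simp_rw [prod_mul_log_prod_div _ _ _ fun k _ => hv k _]
  rw [Finset.sum_comm]
  exact Finset.sum_congr rfl fun k _ =>
    sum_pi_prod_mul_apply f hf k fun a => Real.log (f k a / v k a)

end ProductSums

namespace Matrix

variable {κ : Type*} [Fintype κ] [DecidableEq κ] {d : κ → Type*} [∀ k, Fintype (d k)]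

/-- The Kronecker product `A 1 ⊗ ⋯ ⊗ A m`, with rows and columns indexed by tuples. -/
def piKron {R : Type*} [CommMonoid R] (A : ∀ k, Matrix (d k) (d k) R) :
    Matrix (∀ k, d k) (∀ k, d k) R :=
  of fun x y => ∏ k, A k (x k) (y k)

variable {R : Type*} [CommSemiring R]

theorem trace_piKron (A : ∀ k, Matrix (d k) (d k) R) :
    (piKron A).trace = ∏ k, (A k).trace := by
  simp only [trace, diag, piKron, of_apply, Fintype.prod_sum]

theorem piKron_mul_piKron (A B : ∀ k, Matrix (d k) (d k) R) :
    piKron A * piKron B = piKron fun k => A k * B k := by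
  ext x y
  simp only [piKron, mul_apply, of_apply, ← Finset.prod_mul_distrib, Fintype.prod_sum]

theorem re_trace_piKron (A : ∀ k, Matrix (d k) (d k) ℂ)
    (hA : ∀ k, ((A k).trace.re : ℂ) = (A k).trace) :
    (piKron A).trace.re = ∏ k, (A k).trace.re := by
  rw [trace_piKron, Finset.prod_congr rfl fun k _ => (hA k).symm, ← Complex.ofReal_prod,
    Complex.ofReal_re]

section Hermitian

variable {n : Type*} [Fintype n]

theorem IsHermitian.ofReal_re_trace {A : Matrix n n ℂ} (hA : A.IsHermitian) :
    (A.trace.re : ℂ) = A.trace :=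
  Complex.conj_eq_iff_re.mp (by rw [← Complex.star_def, ← trace_conjTranspose, hA.eq])

theorem IsHermitian.ofReal_re_trace_mul {A B : Matrix n n ℂ} (hA : A.IsHermitian)
    (hB : B.IsHermitian) : ((A * B).trace.re : ℂ) = (A * B).trace :=
  Complex.conj_eq_iff_re.mp
    (by rw [← Complex.star_def, ← trace_conjTranspose, conjTranspose_mul, hA.eq, hB.eq,
      trace_mul_comm])

end Hermitian

end Matrix

section ObservationalEntropy

variable {n ι : Type} [Fintype n] [DecidableEq n] [Fintype ι]

theorem IsCoarseGraining.vol_ne_zero {P : ι → Matrix n n ℂ} (hP : IsCoarseGraining P)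
    (i : ι) : vol P i ≠ 0 := by
  obtain ⟨hherm, hidem, hne, -, -⟩ := hP
  have htrace : (P i).trace ≠ 0 := by
    rw [← hidem i]
    nth_rw 1 [← (hherm i).eq]
    exact trace_conjTranspose_mul_self_eq_zero_iff.not.mpr (hne i)
  rw [← (hherm i).ofReal_re_trace] at htrace
  exact Complex.ofReal_ne_zero.mp htrace

theorem IsCoarseGraining.sum_prob {P : ι → Matrix n n ℂ} (hP : IsCoarseGraining P)
    {ρ : Matrix n n ℂ} (hρ : IsDensityMatrix ρ) : ∑ i, prob P ρ i = 1 := by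
  simp only [prob, ← Complex.re_sum, ← trace_sum, ← Finset.sum_mul, hP.2.2.2.2, one_mul,
    hρ.2, Complex.one_re]

end ObservationalEntropy

/-- observational entropy is extensive: for a product coarse-graining
`C = C^(1) ⊗ ⋯ ⊗ C^(m)` and a product state `ρ = ρ^(1) ⊗ ⋯ ⊗ ρ^(m)`,
`S_O(C)(ρ) = ∑_k S_O(C^(k))(ρ^(k))`. -/
theorem obsEntropy_extensive {m : ℕ} (d : Fin m → Type) [∀ k, Fintype (d k)]
    [∀ k, DecidableEq (d k)] (ι : Fin m → Type) [∀ k, Fintype (ι k)]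
    (P : ∀ k, ι k → Matrix (d k) (d k) ℂ) (ρ : ∀ k, Matrix (d k) (d k) ℂ)
    (hP : ∀ k, IsCoarseGraining (P k)) (hρ : ∀ k, IsDensityMatrix (ρ k)) :
    obsEntropy
        (fun i : (∀ k, ι k) =>
          Matrix.of fun x y : (∀ k, d k) => ∏ k, P k (i k) (x k) (y k))
        (Matrix.of fun x y : (∀ k, d k) => ∏ k, ρ k (x k) (y k))
      = ∑ k, obsEntropy (P k) (ρ k) := by
  have hprob : ∀ i : ∀ k, ι k,
      prob (fun i => piKron fun k => P k (i k)) (piKron ρ) i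
        = ∏ k, prob (P k) (ρ k) (i k) := by
    intro i
    rw [prob, piKron_mul_piKron]
    exact re_trace_piKron _ fun k => ((hP k).1 _).ofReal_re_trace_mul (hρ k).1.isHermitian
  have hvol : ∀ i : ∀ k, ι k,
      vol (fun i => piKron fun k => P k (i k)) i = ∏ k, vol (P k) (i k) := fun i =>
    re_trace_piKron _ fun k => ((hP k).1 _).ofReal_re_trace
  show obsEntropy (fun i : ∀ k, ι k => piKron fun k => P k (i k)) (piKron ρ)
    = ∑ k, obsEntropy (P k) (ρ k)
  simp only [obsEntropy, hprob, hvol, Finset.sum_neg_distrib,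
    sum_pi_prod_mul_log_prod_div _ _ (fun k => (hP k).sum_prob (hρ k)) fun k => (hP k).vol_ne_zero]
end

section
/- Observational entropy equals ln dim H minus the Kullback-Leibler divergence between the measurement probability distribution of ρ and that of the maximally mixed state: S_O(C₁,…,C_n)(ρ) = ln dim H − D_KL(P(ρ) || P(I/dim H)). -/
open scoped BigOperators ComplexOrder
open Matrix

/-- The descending product `P_{i_n} ⋯ P_{i₁}` for a sequence of coarse-grainings and a
multi-index `i`. -/
noncomputable def seqProd {n : Type} [Fintype n] [DecidableEq n] {N : ℕ} {ι : Fin N → Type}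
    (P : ∀ k, ι k → Matrix n n ℂ) (i : ∀ k, ι k) : Matrix n n ℂ :=
  ((List.finRange N).reverse.map (fun k => P k (i k))).prod

/-- Probability of the multi-macrostate `(i₁, …, i_n)`:
`p_{i₁,…,i_n} = tr(P_{i_n}⋯P_{i₁} ρ P_{i₁}⋯P_{i_n})`. -/
noncomputable def mProb {n : Type} [Fintype n] [DecidableEq n] {N : ℕ} {ι : Fin N → Type}
    [∀ k, Fintype (ι k)] (P : ∀ k, ι k → Matrix n n ℂ) (ρ : Matrix n n ℂ)
    (i : ∀ k, ι k) : ℝ :=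
  ((seqProd P i * ρ * (seqProd P i)ᴴ).trace).re

/-- Volume of the multi-macrostate `(i₁, …, i_n)`:
`V_{i₁,…,i_n} = tr(P_{i_n}⋯P_{i₁}⋯P_{i_n})`. -/
noncomputable def mVol {n : Type} [Fintype n] [DecidableEq n] {N : ℕ} {ι : Fin N → Type}
    [∀ k, Fintype (ι k)] (P : ∀ k, ι k → Matrix n n ℂ) (i : ∀ k, ι k) : ℝ :=
  ((seqProd P i * (seqProd P i)ᴴ).trace).re

/-- Observational entropy with multiple coarse-grainings
`S_O(C₁,…,C_n)(ρ) = -∑ p_{i₁,…,i_n} ln (p_{i₁,…,i_n} / V_{i₁,…,i_n})`. -/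
noncomputable def mObsEntropy {n : Type} [Fintype n] [DecidableEq n] {N : ℕ} {ι : Fin N → Type}
    [∀ k, Fintype (ι k)] (P : ∀ k, ι k → Matrix n n ℂ) (ρ : Matrix n n ℂ) : ℝ :=
  -∑ i : (∀ k, ι k), mProb P ρ i * Real.log (mProb P ρ i / mVol P i)

/-!
Each multi-index `i` selects the operator `A_i = P_{i_n} ⋯ P_{i₁}`, and these form a complete
family, `∑ A_iᴴ A_i = 1`, so `p_i = tr(A_i ρ A_iᴴ)` sums to `tr ρ = 1`. Splitting
`ln (p / (V / d)) = ln (p / V) + ln d` then gives the identity; the split fails only when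
`V_i = tr(A_i A_iᴴ) = 0`, but then `A_i = 0` and the term vanishes on both sides.
-/

lemma Real.sum_mul_log_div_div {α : Type} [Fintype α] {p V : α → ℝ}
    (hpV : ∀ i, V i = 0 → p i = 0) {d : ℝ} (hd : d ≠ 0) :
    ∑ i, p i * log (p i / (V i / d)) = ∑ i, p i * log (p i / V i) + (∑ i, p i) * log d := by
  rw [Finset.sum_mul, ← Finset.sum_add_distrib]
  refine Finset.sum_congr rfl fun i _ => ?_
  by_cases hp : p i = 0
  · simp [hp]
  · have hV : V i ≠ 0 := mt (hpV i) hp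
    rw [div_div_eq_mul_div, mul_div_right_comm, log_mul (div_ne_zero hp hV) hd, mul_add]

lemma Matrix.eq_zero_of_re_trace_mul_conjTranspose_self_eq_zero {m n : Type} [Fintype m]
    [Fintype n] {A : Matrix m n ℂ} (h : (A * Aᴴ).trace.re = 0) : A = 0 := by
  rw [← trace_mul_conjTranspose_self_eq_zero_iff]
  obtain ⟨-, him⟩ := Complex.nonneg_iff.mp (posSemidef_self_mul_conjTranspose A).trace_nonneg
  exact Complex.ext h him.symm

section

variable {n : Type} [Fintype n] [DecidableEq n]

lemma IsCoarseGraining.sum_conjTranspose_mul_self {ι : Type} [Fintype ι]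
    {P : ι → Matrix n n ℂ} (hP : IsCoarseGraining P) : ∑ a, (P a)ᴴ * P a = 1 := by
  obtain ⟨hherm, hidem, -, -, hsum⟩ := hP
  simpa only [(hherm _).eq, hidem] using hsum

lemma seqProd_cons {N : ℕ} {ι : Fin (N + 1) → Type} (P : ∀ k, ι k → Matrix n n ℂ) (a : ι 0)
    (f : ∀ k : Fin N, ι k.succ) :
    seqProd P (Fin.cons a f) = seqProd (fun k => P k.succ) f * P 0 a := by
  simp [seqProd, List.finRange_succ, Function.comp_def]

lemma sum_conjTranspose_seqProd_mul_self :
    ∀ {N : ℕ} {ι : Fin N → Type} [∀ k, Fintype (ι k)] (P : ∀ k, ι k → Matrix n n ℂ),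
      (∀ k, ∑ a, (P k a)ᴴ * P k a = 1) → ∑ i, (seqProd P i)ᴴ * seqProd P i = 1
  | 0, _, _, P, _ => by simp [seqProd]
  | N + 1, ι, _, P, hP => by
    set Q : ∀ k : Fin N, ι k.succ → Matrix n n ℂ := fun k => P k.succ
    have hcons (a : ι 0) (f : ∀ k : Fin N, ι k.succ) :
        (seqProd P (Fin.cons a f))ᴴ * seqProd P (Fin.cons a f) =
          (P 0 a)ᴴ * ((seqProd Q f)ᴴ * seqProd Q f) * P 0 a := by
      simp only [seqProd_cons, conjTranspose_mul, Matrix.mul_assoc, Q]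
    rw [← (Fin.consEquiv ι).sum_comp, Fintype.sum_prod_type]
    simp only [Fin.consEquiv, Equiv.coe_fn_mk, hcons, ← Finset.sum_mul, ← Finset.mul_sum,
      sum_conjTranspose_seqProd_mul_self Q (fun k => hP k.succ), Matrix.mul_one]
    exact hP 0

variable {N : ℕ} {ι : Fin N → Type} [∀ k, Fintype (ι k)] {P : ∀ k, ι k → Matrix n n ℂ}

lemma sum_mProb (hP : ∀ k, ∑ a, (P k a)ᴴ * P k a = 1) (ρ : Matrix n n ℂ) :
    ∑ i, mProb P ρ i = ρ.trace.re := by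
  simp only [mProb, trace_mul_cycle (seqProd P _), ← Complex.re_sum, ← trace_sum,
    ← Finset.sum_mul, sum_conjTranspose_seqProd_mul_self P hP, Matrix.one_mul]

lemma mProb_eq_zero_of_mVol_eq_zero (ρ : Matrix n n ℂ) {i : ∀ k, ι k} (h : mVol P i = 0) :
    mProb P ρ i = 0 := by
  simp [mProb, eq_zero_of_re_trace_mul_conjTranspose_self_eq_zero h]

end

lemma IsDensityMatrix.card_ne_zero {n : Type} [Fintype n] [DecidableEq n] {ρ : Matrix n n ℂ}
    (hρ : IsDensityMatrix ρ) : Fintype.card n ≠ 0 := by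
  intro hcard
  have : IsEmpty n := Fintype.card_eq_zero_iff.mp hcard
  simpa [trace] using hρ.2

/-- observational entropy equals `ln dim H` minus the Kullback–Leibler divergence
between the measurement distribution of `ρ` and that of the maximally mixed state
(whose probabilities are `V_{i₁,…,i_n} / dim H`). -/
theorem mObsEntropy_eq_log_sub_KL {n : Type} [Fintype n] [DecidableEq n] {N : ℕ}
    {ι : Fin N → Type} [∀ k, Fintype (ι k)]
    (P : ∀ k, ι k → Matrix n n ℂ) (ρ : Matrix n n ℂ)
    (hP : ∀ k, IsCoarseGraining (P k)) (hρ : IsDensityMatrix ρ) :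
    mObsEntropy P ρ =
      Real.log (Fintype.card n) -
        ∑ i : (∀ k, ι k),
          mProb P ρ i * Real.log (mProb P ρ i / (mVol P i / (Fintype.card n))) := by
  have hd : (Fintype.card n : ℝ) ≠ 0 := Nat.cast_ne_zero.mpr hρ.card_ne_zero
  rw [Real.sum_mul_log_div_div (fun i => mProb_eq_zero_of_mVol_eq_zero ρ) hd,
    sum_mProb (fun k => (hP k).sum_conjTranspose_mul_self), hρ.2, Complex.one_re, mObsEntropy]
  ring
end

section
/- If the first coarse-graining in a sequence is C₁ and C_{n+1} is rougher than the reversed preceding sequence, i.e., C_{n+1} ↪ (C_n,…,C₁) (for every multi-index (i_n,…,i₁) there is P_{i_{n+1}} ∈ C_{n+1} with P_{i₁}⋯P_{i_n} P_{i_{n+1}} = P_{i₁}⋯P_{i_n}), then adding C_{n+1} leaves the observational entropy unchanged: S_O(C₁,…,C_n,C_{n+1})(ρ) = S_O(C₁,…,C_n)(ρ) for all density matrices ρ. -/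
open scoped BigOperators ComplexOrder
open Matrix

/-- The ascending product `P_{i₁} ⋯ P_{i_n}`. -/
noncomputable def ascProd {n : Type} [Fintype n] [DecidableEq n] {N : ℕ} {ι : Fin N → Type}
    (P : ∀ k, ι k → Matrix n n ℂ) (i : ∀ k, ι k) : Matrix n n ℂ :=
  ((List.finRange N).map (fun k => P k (i k))).prod

/-!
Write `B = P_{i_n} ⋯ P_{i₁}`. Taking adjoints, the redundancy hypothesis says that some projector
`P_{j₀}` of the last coarse-graining fixes `B` from the left; by orthogonality every other `P_j`
then annihilates `B`. Hence in the sum over the last index `j` of the longer entropy, the product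
`P_j B` is `B` for `j = j₀` and `0` otherwise, and a zero product contributes nothing.
-/

open Finset

lemma sum_apply_mul_eq_of_mul_eq {R M ι : Type*} [SemigroupWithZero R] [AddCommMonoid M]
    [Fintype ι] {Q : ι → R} (hQ : ∀ i j, i ≠ j → Q i * Q j = 0) {j₀ : ι} {b : R}
    (hb : Q j₀ * b = b) {f : R → M} (hf : f 0 = 0) :
    ∑ j, f (Q j * b) = f b := by
  have hkill : ∀ j, j ≠ j₀ → Q j * b = 0 := fun j hj => by
    rw [← hb, ← mul_assoc, hQ j j₀ hj, zero_mul]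
  rw [sum_eq_single_of_mem j₀ (mem_univ j₀) fun j _ hj => by rw [hkill j hj, hf], hb]

section Products

variable {n : Type} [Fintype n] [DecidableEq n]

lemma seqProd_snoc {N : ℕ} {ι : Fin (N + 1) → Type} (P : ∀ k, ι k → Matrix n n ℂ)
    (i : ∀ k : Fin N, ι k.castSucc) (j : ι (Fin.last N)) :
    seqProd P (Fin.snoc i j) = P (Fin.last N) j * seqProd (fun k : Fin N => P k.castSucc) i := by
  rw [seqProd, seqProd, List.map_reverse, List.map_reverse, ← List.ofFn_eq_map,
    ← List.ofFn_eq_map, List.ofFn_succ', List.concat_eq_append, List.reverse_append]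
  simp

lemma conjTranspose_seqProd {N : ℕ} {ι : Fin N → Type} {P : ∀ k, ι k → Matrix n n ℂ}
    (hP : ∀ k j, (P k j).IsHermitian) (i : ∀ k, ι k) :
    (seqProd P i)ᴴ = ascProd P i := by
  simp [seqProd, ascProd, Matrix.conjTranspose_list_prod, List.map_reverse, Function.comp_def,
    fun k j => (hP k j).eq]

lemma mul_seqProd_of_ascProd_mul {N : ℕ} {ι : Fin N → Type} {P : ∀ k, ι k → Matrix n n ℂ}
    (hP : ∀ k j, (P k j).IsHermitian) {i : ∀ k, ι k} {p : Matrix n n ℂ} (hp : p.IsHermitian)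
    (h : ascProd P i * p = ascProd P i) : p * seqProd P i = seqProd P i := by
  simpa [← conjTranspose_seqProd hP, hp.eq] using congrArg Matrix.conjTranspose h

noncomputable def mObsEntropySummand (ρ A : Matrix n n ℂ) : ℝ :=
  (A * ρ * Aᴴ).trace.re * Real.log ((A * ρ * Aᴴ).trace.re / (A * Aᴴ).trace.re)

@[simp]
lemma mObsEntropySummand_zero (ρ : Matrix n n ℂ) : mObsEntropySummand ρ 0 = 0 := by
  simp [mObsEntropySummand]

lemma mObsEntropy_eq_neg_sum_summand {N : ℕ} {ι : Fin N → Type} [∀ k, Fintype (ι k)]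
    (P : ∀ k, ι k → Matrix n n ℂ) (ρ : Matrix n n ℂ) :
    mObsEntropy P ρ = -∑ i, mObsEntropySummand ρ (seqProd P i) :=
  rfl

end Products

theorem mObsEntropy_redundant_last_general {n : Type} [Fintype n] [DecidableEq n] {N : ℕ}
    {ι : Fin (N + 1) → Type} [∀ k, Fintype (ι k)]
    (P : ∀ k, ι k → Matrix n n ℂ) (ρ : Matrix n n ℂ)
    (hP : ∀ k, IsCoarseGraining (P k))
    (hred : ∀ i : ∀ k : Fin N, ι k.castSucc, ∃ j : ι (Fin.last N),
      ascProd (fun k : Fin N => P k.castSucc) i * P (Fin.last N) j =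
        ascProd (fun k : Fin N => P k.castSucc) i) :
    mObsEntropy P ρ = mObsEntropy (fun k : Fin N => P k.castSucc) ρ := by
  have hHerm : ∀ k j, (P k j).IsHermitian := fun k => (hP k).1
  rw [mObsEntropy_eq_neg_sum_summand, mObsEntropy_eq_neg_sum_summand,
    ← (Fin.snocEquiv ι).sum_comp, Fintype.sum_prod_type_right]
  congr 1
  refine sum_congr rfl fun i _ => ?_
  obtain ⟨j₀, hj₀⟩ := hred i
  change ∑ j, mObsEntropySummand ρ (seqProd P (Fin.snoc i j)) = _
  simp only [seqProd_snoc]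
  exact sum_apply_mul_eq_of_mul_eq (hP (Fin.last N)).2.2.2.1
    (mul_seqProd_of_ascProd_mul (fun k => hHerm k.castSucc) (hHerm _ j₀) hj₀)
    (mObsEntropySummand_zero ρ)

/-- if `C_{n+1} ↪ (C_n,…,C₁)` (for every multi-index there is
`P_{i_{n+1}} ∈ C_{n+1}` with `P_{i₁}⋯P_{i_n} P_{i_{n+1}} = P_{i₁}⋯P_{i_n}`), then adding
`C_{n+1}` leaves the observational entropy unchanged. -/
theorem mObsEntropy_redundant_last {n : Type} [Fintype n] [DecidableEq n] {N : ℕ}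
    {ι : Fin (N + 1) → Type} [∀ k, Fintype (ι k)]
    (P : ∀ k, ι k → Matrix n n ℂ) (ρ : Matrix n n ℂ)
    (hP : ∀ k, IsCoarseGraining (P k)) (hρ : IsDensityMatrix ρ)
    (hred : ∀ i : ∀ k : Fin N, ι k.castSucc, ∃ j : ι (Fin.last N),
      ascProd (fun k : Fin N => P k.castSucc) i * P (Fin.last N) j =
        ascProd (fun k : Fin N => P k.castSucc) i) :
    mObsEntropy P ρ = mObsEntropy (fun k : Fin N => P k.castSucc) ρ :=
  mObsEntropy_redundant_last_general P ρ hP hred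
end
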